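/- arXiv:2306.14194 — 5 statements merged into one kernel-verified Lean document; each statement's English description precedes it below -/
import Mathlib

section
/- If A ⊆ B are subsets of ℝⁿ that are both like ℝᵏ, then there exists an open set O ⊆ ℝⁿ such that A = B ∩ O. -/
open Set

noncomputable section

def LikeR (n k : ℕ) (U : Set (EuclideanSpace ℝ (Fin n))) : Prop :=
  ∃ (V : Set (EuclideanSpace ℝ (Fin k)))
    (φ : EuclideanSpace ℝ (Fin k) → EuclideanSpace ℝ (Fin n))
    (ψ : EuclideanSpace ℝ (Fin n) → EuclideanSpace ℝ (Fin k))
    (S : Set (EuclideanSpace ℝ (Fin n))),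
    IsOpen V ∧ ContDiffOn ℝ (⊤ : ℕ∞) φ V ∧ Set.BijOn φ V U ∧
    IsOpen S ∧ U ⊆ S ∧ ContDiffOn ℝ (⊤ : ℕ∞) ψ S ∧ ∀ x ∈ V, ψ (φ x) = x

def IsKManifold (n k : ℕ) (M : Set (EuclideanSpace ℝ (Fin n))) : Prop :=
  ∀ p ∈ M, ∃ U : Set (EuclideanSpace ℝ (Fin n)), IsOpen U ∧ p ∈ U ∧ LikeR n k (U ∩ M)

/-- If `A ⊆ B` are both like `ℝᵏ`, then `A = B ∩ O` for some open `O ⊆ ℝⁿ`. -/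
theorem inc_lemma {n k : ℕ} (A B : Set (EuclideanSpace ℝ (Fin n)))
    (hAB : A ⊆ B) (hA : LikeR n k A) (hB : LikeR n k B) :
    ∃ O : Set (EuclideanSpace ℝ (Fin n)), IsOpen O ∧ A = B ∩ O := by
  obtain ⟨VA, φA, ψA, SA, hVA, hφA, hbA, hSA, hASA, hψA, hinvA⟩ := hA
  obtain ⟨VB, φB, ψB, SB, hVB, hφB, hbB, hSB, hBSB, hψB, hinvB⟩ := hB
  set f : EuclideanSpace ℝ (Fin k) → EuclideanSpace ℝ (Fin k) := fun x => ψB (φA x) with hf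
  set g : EuclideanSpace ℝ (Fin k) → EuclideanSpace ℝ (Fin k) := fun y => ψA (φB y) with hg
  -- basic facts
  have hφAmem : ∀ x ∈ VA, φA x ∈ A := fun x hx => hbA.mapsTo hx
  have hfVB : ∀ x ∈ VA, f x ∈ VB := by
    intro x hx
    obtain ⟨y, hy, hyeq⟩ := hbB.surjOn (hAB (hφAmem x hx))
    have : f x = y := by simp only [hf, ← hyeq, hinvB y hy]
    rw [this]; exact hy
  have hφBf : ∀ x ∈ VA, φB (f x) = φA x := by
    intro x hx
    obtain ⟨y, hy, hyeq⟩ := hbB.surjOn (hAB (hφAmem x hx))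
    have : f x = y := by simp only [hf, ← hyeq, hinvB y hy]
    rw [this, hyeq]
  have hgf : ∀ x ∈ VA, g (f x) = x := by
    intro x hx
    simp only [hg, hφBf x hx, hinvA x hx]
  -- f is an open map on VA
  have hopen : IsOpen (f '' VA) := by
    rw [isOpen_iff_mem_nhds]
    rintro _ ⟨x, hx, rfl⟩
    have hfx : ContDiffAt ℝ (⊤ : ℕ∞) f x := by
      have h1 : ContDiffAt ℝ (⊤ : ℕ∞) φA x := hφA.contDiffAt (hVA.mem_nhds hx)
      have h2 : ContDiffAt ℝ (⊤ : ℕ∞) ψB (φA x) :=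
        hψB.contDiffAt (hSB.mem_nhds (hBSB (hAB (hφAmem x hx))))
      exact h2.comp x h1
    have hgx : ContDiffAt ℝ (⊤ : ℕ∞) g (f x) := by
      have h1 : ContDiffAt ℝ (⊤ : ℕ∞) φB (f x) := hφB.contDiffAt (hVB.mem_nhds (hfVB x hx))
      have h2 : ContDiffAt ℝ (⊤ : ℕ∞) ψA (φB (f x)) := by
        rw [hφBf x hx]
        exact hψA.contDiffAt (hSA.mem_nhds (hASA (hφAmem x hx)))
      exact h2.comp (f x) h1
    set f' := fderiv ℝ f x with hf'
    have hDf : HasStrictFDerivAt f f' x := hfx.hasStrictFDerivAt (by simp)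
    have hDg : HasFDerivAt g (fderiv ℝ g (f x)) (f x) :=
      (hgx.differentiableAt (by simp)).hasFDerivAt
    -- chain rule: derivative of g ∘ f is id
    have hcomp : HasFDerivAt (g ∘ f) ((fderiv ℝ g (f x)).comp f') x :=
      hDg.comp x hDf.hasFDerivAt
    have hcongr : g ∘ f =ᶠ[nhds x] id := by
      filter_upwards [hVA.mem_nhds hx] with y hy
      exact hgf y hy
    have hid : HasFDerivAt (g ∘ f) (ContinuousLinearMap.id ℝ _) x :=
      (hasFDerivAt_id x).congr_of_eventuallyEq hcongr
    have huniq : (fderiv ℝ g (f x)).comp f' = ContinuousLinearMap.id ℝ _ :=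
      hcomp.unique hid
    have hinj : Function.Injective f' := by
      intro a b hab
      have := congrArg (fderiv ℝ g (f x)) hab
      simpa [← ContinuousLinearMap.comp_apply, huniq] using this
    have hbij : Function.Bijective (f' : EuclideanSpace ℝ (Fin k) →ₗ[ℝ]
        EuclideanSpace ℝ (Fin k)) :=
      ⟨hinj, (LinearMap.injective_iff_surjective).mp hinj⟩
    let e0 := LinearEquiv.ofBijective (f' : EuclideanSpace ℝ (Fin k) →ₗ[ℝ]
        EuclideanSpace ℝ (Fin k)) hbij
    let e := e0.toContinuousLinearEquiv
    have hcoe : (e : EuclideanSpace ℝ (Fin k) →L[ℝ] EuclideanSpace ℝ (Fin k)) = f' := by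
      ext v; rfl
    have hDfe : HasStrictFDerivAt f
        (e : EuclideanSpace ℝ (Fin k) →L[ℝ] EuclideanSpace ℝ (Fin k)) x := by
      rw [hcoe]; exact hDf
    have hmap := hDfe.map_nhds_eq_of_equiv
    rw [← hmap]
    exact Filter.image_mem_map (hVA.mem_nhds hx)
  -- define O
  refine ⟨SB ∩ ψB ⁻¹' (f '' VA), ?_, ?_⟩
  · exact (hψB.continuousOn).isOpen_inter_preimage hSB hopen
  · apply Subset.antisymm
    · intro y hy
      obtain ⟨x, hx, hxeq⟩ := hbA.surjOn hy
      exact ⟨hAB hy, hBSB (hAB hy), ⟨x, hx, show ψB (φA x) = ψB y by rw [hxeq]⟩⟩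
    · intro y hy
      obtain ⟨hyB, -, x, hx, hfx⟩ := hy
      obtain ⟨v, hv, hveq⟩ := hbB.surjOn hyB
      have h1 : f x = v := by rw [hfx, ← hveq]; exact hinvB v hv
      have : φB (f x) = _ := congrArg φB h1
      rw [hφBf x hx, hveq] at this
      rw [← this]
      exact hφAmem x hx
end
end

section
/- Suppose A ⊆ B ⊆ ℝⁿ, with maps φ_B: T_B → B a smooth bijection from an open T_B ⊆ ℝᵏ whose inverse extends to a smooth ψ_B on an open neighborhood of B, and φ_A: T_A → A a smooth bijection from an open T_A ⊆ ℝᵏ whose inverse extends to a smooth map on an open neighborhood of A. Then φ_B⁻¹(A) = ψ_B(A) is an open subset of ℝᵏ. -/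
open Set

noncomputable section

/-- If `A ⊆ B ⊆ ℝⁿ`, `φ_B : T_B → B` is a smooth bijection from an open `T_B ⊆ ℝᵏ` whose inverse
extends to a smooth `ψ_B` on an open neighborhood `S_B` of `B`, and `φ_A : T_A → A` is a smooth
bijection from an open `T_A ⊆ ℝᵏ` whose inverse extends to a smooth map `ψ_A` on an open
neighborhood `S_A` of `A`, then `φ_B⁻¹(A) = ψ_B(A)` is an open subset of `ℝᵏ`. -/
theorem preimage_of_like_subset_isOpen {n k : ℕ}
    (A B : Set (EuclideanSpace ℝ (Fin n))) (hAB : A ⊆ B)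
    (TB TA : Set (EuclideanSpace ℝ (Fin k)))
    (SB SA : Set (EuclideanSpace ℝ (Fin n)))
    (φB φA : EuclideanSpace ℝ (Fin k) → EuclideanSpace ℝ (Fin n))
    (ψB ψA : EuclideanSpace ℝ (Fin n) → EuclideanSpace ℝ (Fin k))
    (hTB : IsOpen TB) (hφB : ContDiffOn ℝ (⊤ : ℕ∞) φB TB) (hφBbij : Set.BijOn φB TB B)
    (hSB : IsOpen SB) (hBSB : B ⊆ SB) (hψB : ContDiffOn ℝ (⊤ : ℕ∞) ψB SB)
    (hinvB : ∀ x ∈ TB, ψB (φB x) = x)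
    (hTA : IsOpen TA) (hφA : ContDiffOn ℝ (⊤ : ℕ∞) φA TA) (hφAbij : Set.BijOn φA TA A)
    (hSA : IsOpen SA) (hASA : A ⊆ SA) (hψA : ContDiffOn ℝ (⊤ : ℕ∞) ψA SA)
    (hinvA : ∀ x ∈ TA, ψA (φA x) = x) :
    ψB '' A = TB ∩ φB ⁻¹' A ∧ IsOpen (ψB '' A) := by
  have himage : ψB '' A = TB ∩ φB ⁻¹' A := by
    ext x
    constructor
    · rintro ⟨a, haA, rfl⟩
      obtain ⟨t, htTB, hta⟩ := hφBbij.2.2 (hAB haA)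
      constructor
      · rw [← hta, hinvB t htTB]; exact htTB
      · rw [← hta, hinvB t htTB]
        show φB t ∈ A
        rw [hta]; exact haA
    · rintro ⟨hxTB, hxA⟩
      exact ⟨φB x, hxA, hinvB x hxTB⟩
  refine ⟨himage, ?_⟩
  set f : EuclideanSpace ℝ (Fin k) → EuclideanSpace ℝ (Fin k) := fun t => ψB (φA t) with hf
  set g : EuclideanSpace ℝ (Fin k) → EuclideanSpace ℝ (Fin k) := fun x => ψA (φB x) with hg
  -- f maps TA onto ψB '' A
  have hfim : f '' TA = ψB '' A := by
    rw [← hφAbij.image_eq, image_image]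
  -- g ∘ f = id on TA
  have hgf : ∀ t ∈ TA, g (f t) = t := by
    intro t ht
    have hφAt : φA t ∈ A := hφAbij.1 ht
    obtain ⟨s, hsTB, hs⟩ := hφBbij.2.2 (hAB hφAt)
    have : f t = s := by simp only [hf, ← hs, hinvB s hsTB]
    rw [this, hg]
    simp only [hs, hinvA t ht]
  -- f t lies in TB with φB (f t) = φA t ∈ A ⊆ SA
  have hft : ∀ t ∈ TA, f t ∈ TB ∧ φB (f t) = φA t := by
    intro t ht
    have hφAt : φA t ∈ A := hφAbij.1 ht
    obtain ⟨s, hsTB, hs⟩ := hφBbij.2.2 (hAB hφAt)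
    have : f t = s := by simp only [hf, ← hs, hinvB s hsTB]
    rw [this]
    exact ⟨hsTB, hs⟩
  rw [← hfim, isOpen_iff_mem_nhds]
  rintro x ⟨t, ht, rfl⟩
  -- f is smooth at t
  have hφAt : φA t ∈ A := hφAbij.1 ht
  have hfC : ContDiffAt ℝ (⊤ : ℕ∞) f t := by
    have h1 : ContDiffAt ℝ (⊤ : ℕ∞) φA t := hφA.contDiffAt (hTA.mem_nhds ht)
    have h2 : ContDiffAt ℝ (⊤ : ℕ∞) ψB (φA t) :=
      hψB.contDiffAt (hSB.mem_nhds (hBSB (hAB hφAt)))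
    exact h2.comp t h1
  -- g is smooth at f t
  obtain ⟨hftTB, hftφ⟩ := hft t ht
  have hgC : ContDiffAt ℝ (⊤ : ℕ∞) g (f t) := by
    have h1 : ContDiffAt ℝ (⊤ : ℕ∞) φB (f t) := hφB.contDiffAt (hTB.mem_nhds hftTB)
    have h2 : ContDiffAt ℝ (⊤ : ℕ∞) ψA (φB (f t)) := by
      rw [hftφ]
      exact hψA.contDiffAt (hSA.mem_nhds (hASA hφAt))
    exact h2.comp (f t) h1
  -- chain rule: fderiv g (f t) ∘ fderiv f t = id
  have hdf : DifferentiableAt ℝ f t := hfC.differentiableAt (by simp)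
  have hdg : DifferentiableAt ℝ g (f t) := hgC.differentiableAt (by simp)
  have hcomp : (fderiv ℝ g (f t)).comp (fderiv ℝ f t) = ContinuousLinearMap.id ℝ _ := by
    rw [← fderiv_comp t hdg hdf]
    have hev : (g ∘ f) =ᶠ[nhds t] id := by
      filter_upwards [hTA.mem_nhds ht] with y hy using hgf y hy
    rw [hev.fderiv_eq, fderiv_id]
  -- hence fderiv f t is injective, so bijective
  set F := fderiv ℝ f t with hF
  have hinj : Function.Injective F := by
    intro a b hab
    have := congrArg (fderiv ℝ g (f t)) hab
    have h1 : (fderiv ℝ g (f t)).comp F a = (fderiv ℝ g (f t)).comp F b := this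
    rw [hcomp] at h1
    simpa using h1
  have hbij : Function.Bijective F :=
    ⟨hinj, (LinearMap.injective_iff_surjective (f := (F : EuclideanSpace ℝ (Fin k) →ₗ[ℝ] EuclideanSpace ℝ (Fin k)))).mp hinj⟩
  let e : EuclideanSpace ℝ (Fin k) ≃L[ℝ] EuclideanSpace ℝ (Fin k) :=
    (LinearEquiv.ofBijective (F : EuclideanSpace ℝ (Fin k) →ₗ[ℝ] EuclideanSpace ℝ (Fin k)) hbij).toContinuousLinearEquiv
  have hstrict : HasStrictFDerivAt f (e : EuclideanSpace ℝ (Fin k) →L[ℝ] EuclideanSpace ℝ (Fin k)) t := by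
    have h := hfC.hasStrictFDerivAt (by simp)
    convert h using 1
    all_goals rfl
  have hmap := hstrict.map_nhds_eq_of_equiv
  rw [← hmap]
  exact Filter.image_mem_map (hTA.mem_nhds ht)
end
end

section
/- Let g(x) = x/‖x‖ on ℝⁿ\{0} with components gᵢ. Then for any x ≠ 0 and any ε ∈ ℝⁿ, the vector a with aᵢ = εᵀ H_{gᵢ}(x) ε + 2(xᵀε/‖x‖²)(J_g(x)ε)ᵢ equals x·(−εᵀε/‖x‖³ + (xᵀε)²/‖x‖⁵), and consequently ‖a‖ = εᵀ J_g(x)² ε. -/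
/-!
The derivative of `x ↦ x / ‖x‖` is `J v = v / ‖x‖ - ⟪x, v⟫ x / ‖x‖³`, and differentiating once
more gives the symmetric second derivative
`-(⟪x, w⟫ v + ⟪v, w⟫ x + ⟪x, v⟫ w) / ‖x‖³ + 3 ⟪x, v⟫ ⟪x, w⟫ x / ‖x‖⁵`.
On the diagonal `v = w = ε`, adding `2 ⟪x, ε⟫ / ‖x‖² • J ε` cancels the `ε`-terms and leaves a
multiple of `x`. Its coefficient `-(‖x‖² ‖ε‖² - ⟪x, ε⟫²) / ‖x‖⁵` is nonpositive by
Cauchy–Schwarz, so the norm is `(‖x‖² ‖ε‖² - ⟪x, ε⟫²) / ‖x‖⁴ = ‖J ε‖² = ⟪ε, J (J ε)⟫`.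
-/

open RealInnerProductSpace

section

variable {E : Type*} [NormedAddCommGroup E] [InnerProductSpace ℝ E] {x : E}

theorem hasFDerivAt_norm_of_ne_zero (hx : x ≠ 0) :
    HasFDerivAt (‖·‖) (‖x‖⁻¹ • innerSL ℝ x) x := by
  have h := (hasStrictFDerivAt_norm_sq x).hasFDerivAt.sqrt (by positivity)
  simp only [Real.sqrt_sq (norm_nonneg _)] at h
  refine h.congr_fderiv ?_
  ext v
  simp only [one_div, mul_inv_rev, smul_apply, coe_innerSL_apply, nsmul_eq_mul, Nat.cast_ofNat,
    smul_eq_mul]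
  ring

theorem hasFDerivAt_inv_norm (hx : x ≠ 0) :
    HasFDerivAt (fun y : E => ‖y‖⁻¹) (-(‖x‖ ^ 3)⁻¹ • innerSL ℝ x) x := by
  refine ((hasDerivAt_inv (norm_ne_zero_iff.mpr hx)).comp_hasFDerivAt x
    (hasFDerivAt_norm_of_ne_zero hx)).congr_fderiv ?_
  ext v
  simp only [neg_smul, neg_apply, smul_apply, coe_innerSL_apply, smul_eq_mul, neg_inj]
  ring

theorem hasFDerivAt_normalize (hx : x ≠ 0) :
    HasFDerivAt NormedSpace.normalize
      (‖x‖⁻¹ • ContinuousLinearMap.id ℝ E - (‖x‖ ^ 3)⁻¹ • (innerSL ℝ x).smulRight x) x := by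
  refine ((hasFDerivAt_inv_norm hx).smul (hasFDerivAt_id x)).congr_fderiv ?_
  ext v
  simp only [neg_smul, id_eq, add_apply, smul_apply, ContinuousLinearMap.id_apply,
    ContinuousLinearMap.smulRight_apply, neg_apply, coe_innerSL_apply, smul_eq_mul, sub_apply]
  module

theorem fderiv_normalize_apply (hx : x ≠ 0) (v : E) :
    fderiv ℝ NormedSpace.normalize x v = ‖x‖⁻¹ • v - (⟪x, v⟫ / ‖x‖ ^ 3) • x := by
  rw [(hasFDerivAt_normalize hx).fderiv]
  simp [div_eq_inv_mul, smul_smul]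

theorem hasFDerivAt_fderiv_normalize_apply (hx : x ≠ 0) (v : E) :
    HasFDerivAt (fun y => fderiv ℝ NormedSpace.normalize y v)
      (-(‖x‖ ^ 3)⁻¹ • ((innerSL ℝ x).smulRight v + (innerSL ℝ v).smulRight x
          + ⟪x, v⟫ • ContinuousLinearMap.id ℝ E)
        + (3 * ⟪x, v⟫ / ‖x‖ ^ 5) • (innerSL ℝ x).smulRight x) x := by
  have hinv := hasFDerivAt_inv_norm hx
  have hφ := (hinv.smul_const v).sub
    ((((innerSL ℝ v).hasFDerivAt).mul (hinv.pow 3)).smul (hasFDerivAt_id x))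
  have heq : (fun y => fderiv ℝ NormedSpace.normalize y v) =ᶠ[nhds x]
      fun y => ‖y‖⁻¹ • v - (⟪v, y⟫ * ‖y‖⁻¹ ^ 3) • y := by
    filter_upwards [isOpen_ne.mem_nhds hx] with y hy
    rw [fderiv_normalize_apply hy, real_inner_comm, div_eq_mul_inv, inv_pow]
  refine (hφ.congr_of_eventuallyEq heq).congr_fderiv ?_
  ext w
  have hnx : ‖x‖ ≠ 0 := norm_ne_zero_iff.mpr hx
  simp only [neg_smul, coe_innerSL_apply, inv_pow, Pi.mul_apply, Nat.add_one_sub_one, nsmul_eq_mul,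
    Nat.cast_ofNat, smul_neg, id_eq, sub_apply, ContinuousLinearMap.smulRight_apply, neg_apply,
    smul_apply, smul_eq_mul, add_apply, ContinuousLinearMap.id_apply, real_inner_comm v x, smul_add]
  match_scalars <;> field_simp
  ring

theorem fderiv_fderiv_normalize_apply (hx : x ≠ 0) (v w : E) :
    fderiv ℝ (fun y => fderiv ℝ NormedSpace.normalize y v) x w
      = -(‖x‖ ^ 3)⁻¹ • (⟪x, w⟫ • v + ⟪v, w⟫ • x + ⟪x, v⟫ • w)
        + (3 * ⟪x, v⟫ * ⟪x, w⟫ / ‖x‖ ^ 5) • x := by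
  rw [(hasFDerivAt_fderiv_normalize_apply hx v).fderiv]
  simp only [add_apply, smul_apply, ContinuousLinearMap.smulRight_apply, innerSL_apply_apply,
    ContinuousLinearMap.id_apply]
  module

theorem fderiv_fderiv_normalize_add_smul_fderiv_normalize (hx : x ≠ 0) (v : E) :
    fderiv ℝ (fun y => fderiv ℝ NormedSpace.normalize y v) x v
        + (2 * (⟪x, v⟫ / ‖x‖ ^ 2)) • fderiv ℝ NormedSpace.normalize x v
      = (-(‖v‖ ^ 2) / ‖x‖ ^ 3 + ⟪x, v⟫ ^ 2 / ‖x‖ ^ 5) • x := by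
  have hnx : ‖x‖ ≠ 0 := norm_ne_zero_iff.mpr hx
  rw [fderiv_fderiv_normalize_apply hx, fderiv_normalize_apply hx, real_inner_self_eq_norm_sq]
  match_scalars <;> field_simp <;> ring

theorem inner_fderiv_normalize_fderiv_normalize (hx : x ≠ 0) (v : E) :
    ⟪v, fderiv ℝ NormedSpace.normalize x (fderiv ℝ NormedSpace.normalize x v)⟫
      = ‖v‖ ^ 2 / ‖x‖ ^ 2 - ⟪x, v⟫ ^ 2 / ‖x‖ ^ 4 := by
  have hnx : ‖x‖ ≠ 0 := norm_ne_zero_iff.mpr hx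
  simp only [fderiv_normalize_apply hx, inner_sub_right,
    real_inner_smul_right, real_inner_self_eq_norm_sq, real_inner_comm v x]
  field_simp
  ring

theorem norm_smul_self_eq_sq_div_sub_inner_sq_div (hx : x ≠ 0) (v : E) :
    ‖(-(‖v‖ ^ 2) / ‖x‖ ^ 3 + ⟪x, v⟫ ^ 2 / ‖x‖ ^ 5) • x‖
      = ‖v‖ ^ 2 / ‖x‖ ^ 2 - ⟪x, v⟫ ^ 2 / ‖x‖ ^ 4 := by
  have hpos : 0 < ‖x‖ := norm_pos_iff.mpr hx
  have hcs : ⟪x, v⟫ ^ 2 ≤ ‖x‖ ^ 2 * ‖v‖ ^ 2 := by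
    rw [← mul_pow, ← sq_abs]
    exact pow_le_pow_left₀ (abs_nonneg _) (abs_real_inner_le_norm x v) 2
  have hcoeff : -(‖v‖ ^ 2) / ‖x‖ ^ 3 + ⟪x, v⟫ ^ 2 / ‖x‖ ^ 5
      = -((‖x‖ ^ 2 * ‖v‖ ^ 2 - ⟪x, v⟫ ^ 2) / ‖x‖ ^ 5) := by
    field_simp
    ring
  rw [norm_smul, hcoeff, norm_neg,
    Real.norm_of_nonneg (div_nonneg (sub_nonneg.mpr hcs) (by positivity))]
  field_simp

theorem fderiv_fderiv_apply_coord {ι : Type*} [Fintype ι] {f : E → EuclideanSpace ℝ ι}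
    (hf : ∀ᶠ y in nhds x, DifferentiableAt ℝ f y)
    {v : E} (hf' : DifferentiableAt ℝ (fun y => fderiv ℝ f y v) x) (w : E) (i : ι) :
    fderiv ℝ (fun y => fderiv ℝ (fun z => f z i) y v) x w
      = fderiv ℝ (fun y => fderiv ℝ f y v) x w i := by
  have hcoord {h : E → EuclideanSpace ℝ ι} {y : E} (hy : DifferentiableAt ℝ h y) :
      fderiv ℝ (fun z => h z i) y = (EuclideanSpace.proj i).comp (fderiv ℝ h y) :=
    ((EuclideanSpace.proj (𝕜 := ℝ) (ι := ι) i).hasFDerivAt.comp y hy.hasFDerivAt).fderiv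
  have heq : (fun y => fderiv ℝ (fun z => f z i) y v) =ᶠ[nhds x] fun y => fderiv ℝ f y v i :=
    hf.mono fun y hy => by simp only [hcoord hy]; rfl
  rw [heq.fderiv_eq, hcoord hf']
  rfl

end

/-- For `g(x) = x/‖x‖` on `ℝⁿ\{0}`: the vector `a` with
`aᵢ = εᵀ H_{gᵢ}(x) ε + 2(xᵀε/‖x‖²)(J_g(x)ε)ᵢ` equals `(−εᵀε/‖x‖³ + (xᵀε)²/‖x‖⁵) • x`, and
consequently `‖a‖ = εᵀ J_g(x)² ε`. -/
theorem hessian_identity_normalization {n : ℕ}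
    (g : EuclideanSpace ℝ (Fin n) → EuclideanSpace ℝ (Fin n))
    (hg : ∀ x, g x = ‖x‖⁻¹ • x)
    (x ε : EuclideanSpace ℝ (Fin n)) (hx : x ≠ 0)
    (a : EuclideanSpace ℝ (Fin n))
    (ha : ∀ i, a i = fderiv ℝ (fun y => fderiv ℝ (fun z => g z i) y ε) x ε
          + 2 * (⟪x, ε⟫ / ‖x‖ ^ 2) * (fderiv ℝ g x ε) i) :
    a = (-(‖ε‖ ^ 2) / ‖x‖ ^ 3 + ⟪x, ε⟫ ^ 2 / ‖x‖ ^ 5) • x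
      ∧ ‖a‖ = ⟪ε, fderiv ℝ g x (fderiv ℝ g x ε)⟫ := by
  obtain rfl : g = NormedSpace.normalize := funext hg
  have hdiff : ∀ᶠ y in nhds x, DifferentiableAt ℝ NormedSpace.normalize y :=
    Filter.mem_of_superset (isOpen_ne.mem_nhds hx) fun y hy =>
      (hasFDerivAt_normalize hy).differentiableAt
  have ha_eq : a = (-(‖ε‖ ^ 2) / ‖x‖ ^ 3 + ⟪x, ε⟫ ^ 2 / ‖x‖ ^ 5) • x := by
    rw [← fderiv_fderiv_normalize_add_smul_fderiv_normalize hx]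
    ext i
    rw [ha i, fderiv_fderiv_apply_coord hdiff
      (hasFDerivAt_fderiv_normalize_apply hx ε).differentiableAt]
    simp
  refine ⟨ha_eq, ?_⟩
  rw [ha_eq, norm_smul_self_eq_sq_div_sub_inner_sq_div hx,
    inner_fderiv_normalize_fderiv_normalize hx]
end

section
/- For the normalization map g(x) = x/‖x‖ on ℝⁿ\{0}, at every point x ≠ 0 and for every ε with J_g(x)ε ≠ 0 we have min over λ of ‖[εᵀH_{gᵢ}(x)ε]_{i=1}^n − λ J_g(x)ε‖ / ‖J_g(x)ε‖² ≤ 1. -/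
/-!
Write `N y = ‖y‖⁻¹ • y`, `r = ‖x‖`, `a = ⟪x, ε⟫`. The Jacobian gives `J = r⁻¹ • ε - (a / r³) • x`,
tangent to the sphere, and since `N` is smooth off the origin the coordinate Hessians assemble to
the second derivative `H = D²N(x)[ε, ε] = (3a²/r⁵ - ‖ε‖²/r³) • x - (2a/r³) • ε`. With
`λ = -2a/r²` the tangential part cancels and `H - λ • J = -(‖J‖² / r) • x`: what is left is the
normal part, of length `‖J‖²` because the unit sphere has curvature `1`. So the ratio is
`‖J‖² / ‖J‖²`.
-/

open RealInnerProductSpace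

section InnerProductSpace

variable {E : Type*} [NormedAddCommGroup E] [InnerProductSpace ℝ E] {x : E}

theorem hasFDerivAt_inv_norm_pow (k : ℕ) (hx : x ≠ 0) :
    HasFDerivAt (fun y : E => (‖y‖ ^ k)⁻¹) ((-k / ‖x‖ ^ (k + 2)) • innerSL ℝ x) x := by
  have hr : ‖x‖ ≠ 0 := norm_ne_zero_iff.2 hx
  refine (((hasDerivAt_pow k ‖x‖).inv (pow_ne_zero k hr)).comp_hasFDerivAt x
    (hasFDerivAt_norm_of_ne_zero hx)).congr_fderiv ?_
  rw [smul_smul]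
  congr 1
  rcases k with _ | k
  · simp
  · simp only [Nat.add_sub_cancel]
    field_simp
    ring

theorem contDiffAt_inv_norm_smul {m : WithTop ℕ∞} (hx : x ≠ 0) :
    ContDiffAt ℝ m (fun y : E => ‖y‖⁻¹ • y) x :=
  ((contDiffAt_norm ℝ hx).inv (norm_ne_zero_iff.2 hx)).smul contDiffAt_id

theorem fderiv_inv_norm_smul_apply (hx : x ≠ 0) (v : E) :
    fderiv ℝ (fun y : E => ‖y‖⁻¹ • y) x v = ‖x‖⁻¹ • v - (⟪x, v⟫ / ‖x‖ ^ 3) • x := by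
  have h : HasFDerivAt (fun y : E => (‖y‖ ^ 1)⁻¹ • y) _ x :=
    (hasFDerivAt_inv_norm_pow 1 hx).smul (hasFDerivAt_id x)
  simp only [pow_one] at h
  rw [h.fderiv]
  simp only [add_apply, smul_apply, ContinuousLinearMap.id_apply,
    ContinuousLinearMap.smulRight_apply, innerSL_apply_apply, smul_eq_mul]
  rw [sub_eq_add_neg, ← neg_smul]
  congr 2
  ring

theorem fderiv_fderiv_inv_norm_smul_apply (hx : x ≠ 0) (v : E) :
    fderiv ℝ (fun y => fderiv ℝ (fun z : E => ‖z‖⁻¹ • z) y v) x v =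
      (3 * ⟪x, v⟫ ^ 2 / ‖x‖ ^ 5 - ‖v‖ ^ 2 / ‖x‖ ^ 3) • x - (2 * ⟪x, v⟫ / ‖x‖ ^ 3) • v := by
  have hfirst : (fun y => fderiv ℝ (fun z : E => ‖z‖⁻¹ • z) y v) =ᶠ[nhds x]
      fun y => (‖y‖ ^ 1)⁻¹ • v - (⟪v, y⟫ * (‖y‖ ^ 3)⁻¹) • y := by
    filter_upwards [isOpen_compl_singleton.mem_nhds hx] with y hy
    rw [fderiv_inv_norm_smul_apply hy, pow_one, div_eq_mul_inv, real_inner_comm]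
  have h : HasFDerivAt (fun y => (‖y‖ ^ 1)⁻¹ • v - (⟪v, y⟫ * (‖y‖ ^ 3)⁻¹) • y) _ x :=
    ((hasFDerivAt_inv_norm_pow 1 hx).smul_const v).sub
      (((innerSL ℝ v).hasFDerivAt.mul (hasFDerivAt_inv_norm_pow 3 hx)).smul (hasFDerivAt_id x))
  rw [hfirst.fderiv_eq, h.fderiv]
  simp only [sub_apply, add_apply, smul_apply, ContinuousLinearMap.id_apply,
    ContinuousLinearMap.smulRight_apply, innerSL_apply_apply, smul_eq_mul,
    real_inner_self_eq_norm_sq, Pi.mul_apply, real_inner_comm v x, Nat.cast_one, Nat.cast_ofNat]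
  module

theorem norm_fderiv_inv_norm_smul_apply_sq (hx : x ≠ 0) (v : E) :
    ‖fderiv ℝ (fun y : E => ‖y‖⁻¹ • y) x v‖ ^ 2 = ‖v‖ ^ 2 / ‖x‖ ^ 2 - ⟪x, v⟫ ^ 2 / ‖x‖ ^ 4 := by
  have hr : ‖x‖ ≠ 0 := norm_ne_zero_iff.2 hx
  rw [fderiv_inv_norm_smul_apply hx, norm_sub_sq_real, norm_smul, norm_smul, real_inner_smul_left,
    real_inner_smul_right, Real.norm_eq_abs, Real.norm_eq_abs, mul_pow, mul_pow, sq_abs, sq_abs,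
    real_inner_comm v x]
  field_simp
  ring

theorem fderiv_fderiv_inv_norm_smul_add_smul_fderiv (hx : x ≠ 0) (v : E) :
    fderiv ℝ (fun y => fderiv ℝ (fun z : E => ‖z‖⁻¹ • z) y v) x v +
        (2 * ⟪x, v⟫ / ‖x‖ ^ 2) • fderiv ℝ (fun y : E => ‖y‖⁻¹ • y) x v =
      -(‖fderiv ℝ (fun y : E => ‖y‖⁻¹ • y) x v‖ ^ 2 / ‖x‖) • x := by
  rw [norm_fderiv_inv_norm_smul_apply_sq hx, fderiv_fderiv_inv_norm_smul_apply hx,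
    fderiv_inv_norm_smul_apply hx]
  module

theorem norm_fderiv_fderiv_inv_norm_smul_add_smul_fderiv (hx : x ≠ 0) (v : E) :
    ‖fderiv ℝ (fun y => fderiv ℝ (fun z : E => ‖z‖⁻¹ • z) y v) x v +
        (2 * ⟪x, v⟫ / ‖x‖ ^ 2) • fderiv ℝ (fun y : E => ‖y‖⁻¹ • y) x v‖ =
      ‖fderiv ℝ (fun y : E => ‖y‖⁻¹ • y) x v‖ ^ 2 := by
  rw [fderiv_fderiv_inv_norm_smul_add_smul_fderiv hx, norm_smul, norm_neg, Real.norm_eq_abs,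
    abs_of_nonneg (by positivity), div_mul_cancel₀ _ (norm_ne_zero_iff.2 hx)]

end InnerProductSpace

section EuclideanSpace

variable {𝕜 ι H : Type*} [RCLike 𝕜] [Fintype ι] [NormedAddCommGroup H] [NormedSpace 𝕜 H]

theorem fderiv_euclidean_apply {f : H → EuclideanSpace 𝕜 ι} {y : H} (hf : DifferentiableAt 𝕜 f y)
    (i : ι) : fderiv 𝕜 (fun z => f z i) y = (EuclideanSpace.proj (𝕜 := 𝕜) i).comp (fderiv 𝕜 f y) :=
  ((EuclideanSpace.proj (𝕜 := 𝕜) i).hasFDerivAt.comp y hf.hasFDerivAt).fderiv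

theorem fderiv_fderiv_apply_euclidean {f : H → EuclideanSpace 𝕜 ι} {x : H}
    (hf : ContDiffAt 𝕜 2 f x) (v w : H) (i : ι) :
    fderiv 𝕜 (fun y => fderiv 𝕜 (fun z => f z i) y v) x w =
      fderiv 𝕜 (fun y => fderiv 𝕜 f y v) x w i := by
  have hcoord : (fun y => fderiv 𝕜 (fun z => f z i) y v) =ᶠ[nhds x]
      fun y => fderiv 𝕜 f y v i := by
    filter_upwards [hf.eventually (by simp)] with y hy
    rw [fderiv_euclidean_apply (hy.differentiableAt (by simp))]
    rfl
  have hF : DifferentiableAt 𝕜 (fun y => fderiv 𝕜 f y v) x :=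
    ((hf.fderiv_right (m := 1) (by norm_num)).clm_apply contDiffAt_const).differentiableAt (by simp)
  rw [hcoord.fderiv_eq, fderiv_euclidean_apply hF]
  rfl

end EuclideanSpace

theorem curvature_bound_normalization_le_one_general {n : ℕ}
    (g : EuclideanSpace ℝ (Fin n) → EuclideanSpace ℝ (Fin n))
    (hg : ∀ x, g x = ‖x‖⁻¹ • x)
    (x ε : EuclideanSpace ℝ (Fin n)) (hx : x ≠ 0)
    (h2 : EuclideanSpace ℝ (Fin n))
    (hh2 : ∀ i, h2 i = fderiv ℝ (fun y => fderiv ℝ (fun z => g z i) y ε) x ε) :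
    ∃ lam : ℝ, ‖h2 - lam • fderiv ℝ g x ε‖ / ‖fderiv ℝ g x ε‖ ^ 2 ≤ 1 := by
  obtain rfl : g = fun y => ‖y‖⁻¹ • y := funext hg
  have hH : h2 = fderiv ℝ (fun y => fderiv ℝ (fun z => ‖z‖⁻¹ • z) y ε) x ε := by
    ext i
    rw [hh2, fderiv_fderiv_apply_euclidean (contDiffAt_inv_norm_smul hx)]
  refine ⟨-(2 * ⟪x, ε⟫ / ‖x‖ ^ 2), ?_⟩
  rw [hH, neg_smul, sub_neg_eq_add, norm_fderiv_fderiv_inv_norm_smul_add_smul_fderiv hx]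
  exact div_self_le_one _

/-- For the normalization map `g(x) = x/‖x‖` on `ℝⁿ\{0}`, at every `x ≠ 0` and every `ε` with
`J_g(x)ε ≠ 0`, `min_λ ‖[εᵀH_{gᵢ}(x)ε]ᵢ − λ J_g(x)ε‖ / ‖J_g(x)ε‖² ≤ 1`. -/
theorem curvature_bound_normalization_le_one {n : ℕ}
    (g : EuclideanSpace ℝ (Fin n) → EuclideanSpace ℝ (Fin n))
    (hg : ∀ x, g x = ‖x‖⁻¹ • x)
    (x ε : EuclideanSpace ℝ (Fin n)) (hx : x ≠ 0)
    (hε : fderiv ℝ g x ε ≠ 0)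
    (h2 : EuclideanSpace ℝ (Fin n))
    (hh2 : ∀ i, h2 i = fderiv ℝ (fun y => fderiv ℝ (fun z => g z i) y ε) x ε) :
    ∃ lam : ℝ, ‖h2 - lam • fderiv ℝ g x ε‖ / ‖fderiv ℝ g x ε‖ ^ 2 ≤ 1 :=
  curvature_bound_normalization_le_one_general g hg x ε hx h2 hh2
end

section
/- Let g = d ∘ e with e: ℝⁿ → ℝᵏ and d: ℝᵏ → ℝⁿ smooth, and let σ₁ ≥ ... ≥ σₖ > 0 be the singular values of J_d at e(x'). Then limsup as ε → 0 of min over λ of ‖[εᵀH_{gᵢ}(x')ε]ᵢ − λ J_g(x')ε‖/‖J_g(x')ε‖² (over ε with J_g(x')ε ≠ 0) is at most σ₁ C(e)/σₖ² + √(Σᵢ ‖H_{dᵢ}‖_F²)/σₖ², where C(e) = limsup as ε → 0 of min over λ of ‖[εᵀH_{eᵢ}(x')ε]ᵢ − λ J_e(x')ε‖/‖J_e(x')ε‖². -/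
open RealInnerProductSpace Filter
set_option maxHeartbeats 1000000

noncomputable section

/-- The vector `[εᵀ H_{fᵢ}(x) ε]ᵢ` of second directional derivatives of `f` at `x` along `ε`. -/
def secondDirDeriv {n m : ℕ} (f : EuclideanSpace ℝ (Fin n) → EuclideanSpace ℝ (Fin m))
    (x ε : EuclideanSpace ℝ (Fin n)) : EuclideanSpace ℝ (Fin m) :=
  fderiv ℝ (fun y => fderiv ℝ f y ε) x ε

/-- `min_λ ‖[εᵀH_{fᵢ}(x)ε]ᵢ − λ J_f(x)ε‖ / ‖J_f(x)ε‖²`. -/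
def minLamQuot {n m : ℕ} (f : EuclideanSpace ℝ (Fin n) → EuclideanSpace ℝ (Fin m))
    (x ε : EuclideanSpace ℝ (Fin n)) : ℝ :=
  sInf {c : ℝ | ∃ l : ℝ, c = ‖secondDirDeriv f x ε - l • fderiv ℝ f x ε‖}
    / ‖fderiv ℝ f x ε‖ ^ 2

/-- `limsup_{ε → 0} F(ε)` over `ε` satisfying `P`: the supremum of all finite limits of `F`
along sequences tending to `0`. -/
def paperLimsup {n : ℕ} (F : EuclideanSpace ℝ (Fin n) → ℝ)
    (P : EuclideanSpace ℝ (Fin n) → Prop) : ℝ :=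
  sSup {L : ℝ | ∃ u : ℕ → EuclideanSpace ℝ (Fin n),
    (∀ i, P (u i)) ∧ Tendsto u atTop (nhds 0) ∧ Tendsto (fun i => F (u i)) atTop (nhds L)}

variable {n k : ℕ}
  {e : EuclideanSpace ℝ (Fin n) → EuclideanSpace ℝ (Fin k)}
  {d : EuclideanSpace ℝ (Fin k) → EuclideanSpace ℝ (Fin n)}

lemma sdd_comp (he : ContDiff ℝ (⊤ : ℕ∞) e) (hd : ContDiff ℝ (⊤ : ℕ∞) d)
    (x' ε : EuclideanSpace ℝ (Fin n)) :
    secondDirDeriv (d ∘ e) x' ε =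
      fderiv ℝ d (e x') (secondDirDeriv e x' ε)
      + fderiv ℝ (fderiv ℝ d) (e x') (fderiv ℝ e x' ε) (fderiv ℝ e x' ε) := by
  have hde : Differentiable ℝ e := he.differentiable (by simp)
  have hdd : Differentiable ℝ d := hd.differentiable (by simp)
  have hfd : ContDiff ℝ 1 (fderiv ℝ d) := hd.fderiv_right (by exact WithTop.coe_le_coe.mpr le_top)
  have hfe : ContDiff ℝ 1 (fderiv ℝ e) := he.fderiv_right (by exact WithTop.coe_le_coe.mpr le_top)
  have heq : (fun y => fderiv ℝ (d ∘ e) y ε)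
      = fun y => (fderiv ℝ d (e y)) (fderiv ℝ e y ε) := by
    funext y
    rw [fderiv_comp y (hdd (e y)) (hde y)]
    rfl
  have hc : DifferentiableAt ℝ (fun y => fderiv ℝ d (e y)) x' :=
    ((hfd.differentiable (by simp) (e x')).comp x' (hde x'))
  have hu : DifferentiableAt ℝ (fun y => fderiv ℝ e y ε) x' := by
    exact (hfe.differentiable (by simp)).clm_apply (differentiable_const ε) x'
  have key := fderiv_clm_apply hc hu
  have hc' : fderiv ℝ (fun y => fderiv ℝ d (e y)) x'
      = (fderiv ℝ (fderiv ℝ d) (e x')).comp (fderiv ℝ e x') := by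
    exact fderiv_comp x' (hfd.differentiable (by simp) (e x'))
      (hde x')
  unfold secondDirDeriv
  rw [heq, key, hc']
  simp [ContinuousLinearMap.add_apply, ContinuousLinearMap.comp_apply,
    ContinuousLinearMap.flip_apply]
 

lemma hentry (hd : ContDiff ℝ (⊤ : ℕ∞) d) (y : EuclideanSpace ℝ (Fin k)) (i : Fin n) (a b : Fin k) :
    fderiv ℝ (fun w => fderiv ℝ (fun z => d z i) w (EuclideanSpace.single b 1))
      y (EuclideanSpace.single a 1)
    = fderiv ℝ (fderiv ℝ d) y (EuclideanSpace.single a 1) (EuclideanSpace.single b 1) i := by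
  have hdd : Differentiable ℝ d := hd.differentiable (by simp)
  have hfd : Differentiable ℝ (fderiv ℝ d) :=
    (hd.fderiv_right (m := 1) (by exact WithTop.coe_le_coe.mpr le_top)).differentiable (by simp)
  have h1 : ∀ w, fderiv ℝ (fun z => d z i) w
      = (EuclideanSpace.proj i (𝕜 := ℝ)).comp (fderiv ℝ d w) := by
    intro w
    have : (fun z => d z i) = (EuclideanSpace.proj i (𝕜 := ℝ)) ∘ d := rfl
    rw [this, fderiv_comp w (EuclideanSpace.proj i).differentiableAt (hdd w),
      ContinuousLinearMap.fderiv]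
  have h2 : (fun w => fderiv ℝ (fun z => d z i) w (EuclideanSpace.single b 1))
      = ((EuclideanSpace.proj i (𝕜 := ℝ)).comp
          (ContinuousLinearMap.apply ℝ (EuclideanSpace ℝ (Fin n)) (EuclideanSpace.single b 1)))
        ∘ (fderiv ℝ d) := by
    funext w; simp [h1 w]
  rw [h2, fderiv_comp y (ContinuousLinearMap.differentiableAt _) (hfd y),
    ContinuousLinearMap.fderiv]
  simp

lemma euclid_decomp (w : EuclideanSpace ℝ (Fin k)) :
    w = ∑ a, w a • EuclideanSpace.single a 1 := by
  ext j
  rw [WithLp.ofLp_sum, Finset.sum_apply]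
  simp [EuclideanSpace.single_apply]

lemma euclid_norm_sq (w : EuclideanSpace ℝ (Fin k)) : ‖w‖ ^ 2 = ∑ a, w a ^ 2 := by
  rw [EuclideanSpace.norm_eq, Real.sq_sqrt (by positivity)]
  simp [sq_abs]

lemma bilin_bound {k n : ℕ}
    (B : EuclideanSpace ℝ (Fin k) →L[ℝ] EuclideanSpace ℝ (Fin k) →L[ℝ] EuclideanSpace ℝ (Fin n))
    (w : EuclideanSpace ℝ (Fin k)) :
    ‖B w w‖ ≤ Real.sqrt (∑ i : Fin n, ∑ a : Fin k, ∑ b : Fin k,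
        (B (EuclideanSpace.single a 1) (EuclideanSpace.single b 1) i) ^ 2) * ‖w‖ ^ 2 := by
  set H : Fin n → Fin k → Fin k → ℝ :=
    fun i a b => B (EuclideanSpace.single a 1) (EuclideanSpace.single b 1) i with hH
  set S : ℝ := ∑ i, ∑ a, ∑ b, H i a b ^ 2 with hS
  have hS0 : 0 ≤ S := by positivity
  have hB : B w w = ∑ a, ∑ b, (w a * w b) • B (EuclideanSpace.single a 1)
      (EuclideanSpace.single b 1) := by
    conv_lhs => rw [euclid_decomp w]
    rw [map_sum]
    simp only [map_smul, ContinuousLinearMap.sum_apply, ContinuousLinearMap.smul_apply,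
      map_sum, Finset.smul_sum, smul_smul]
    rw [Finset.sum_comm]
    exact Finset.sum_congr rfl fun a _ => Finset.sum_congr rfl fun b _ => by rw [mul_comm]
  have hcomp : ∀ i, B w w i = ∑ a, ∑ b, (w a * w b) * H i a b := by
    intro i
    rw [hB, WithLp.ofLp_sum, Finset.sum_apply]
    refine Finset.sum_congr rfl fun a _ => ?_
    rw [WithLp.ofLp_sum, Finset.sum_apply]
    rfl
  have hwsum : ∑ p : Fin k × Fin k, (w p.1 * w p.2) ^ 2 = (‖w‖ ^ 2) ^ 2 := by
    rw [Fintype.sum_prod_type, euclid_norm_sq, sq, Finset.sum_mul_sum]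
    exact Finset.sum_congr rfl fun a _ => Finset.sum_congr rfl fun b _ => by ring
  have hnsq : ‖B w w‖ ^ 2 ≤ S * (‖w‖ ^ 2) ^ 2 := by
    rw [euclid_norm_sq]
    have hle : ∀ i : Fin n, (B w w i) ^ 2 ≤ (∑ a, ∑ b, H i a b ^ 2) * (‖w‖ ^ 2) ^ 2 := by
      intro i
      rw [hcomp i, ← Fintype.sum_prod_type (f := fun p : Fin k × Fin k => (w p.1 * w p.2) * H i p.1 p.2)]
      have hcs := Finset.sum_mul_sq_le_sq_mul_sq Finset.univ
        (fun p : Fin k × Fin k => H i p.1 p.2) (fun p : Fin k × Fin k => w p.1 * w p.2)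
      rw [← Fintype.sum_prod_type (f := fun p : Fin k × Fin k => H i p.1 p.2 ^ 2), ← hwsum]
      calc (∑ p : Fin k × Fin k, w p.1 * w p.2 * H i p.1 p.2) ^ 2
          = (∑ p : Fin k × Fin k, H i p.1 p.2 * (w p.1 * w p.2)) ^ 2 := by
            congr 1; exact Finset.sum_congr rfl fun p _ => mul_comm _ _
        _ ≤ _ := hcs
    calc ∑ i, (B w w i) ^ 2 ≤ ∑ i, (∑ a, ∑ b, H i a b ^ 2) * (‖w‖ ^ 2) ^ 2 :=
          Finset.sum_le_sum fun i _ => hle i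
      _ = S * (‖w‖ ^ 2) ^ 2 := by rw [hS, ← Finset.sum_mul]
  have h1 : ‖B w w‖ = Real.sqrt (‖B w w‖ ^ 2) := (Real.sqrt_sq (norm_nonneg _)).symm
  rw [h1]
  calc Real.sqrt (‖B w w‖ ^ 2) ≤ Real.sqrt (S * (‖w‖ ^ 2) ^ 2) := Real.sqrt_le_sqrt hnsq
    _ = Real.sqrt S * ‖w‖ ^ 2 := by
        rw [Real.sqrt_mul hS0, Real.sqrt_sq (by positivity)]

lemma svd_bounds {k n : ℕ} (hk : 0 < k)
    (T : EuclideanSpace ℝ (Fin k) →L[ℝ] EuclideanSpace ℝ (Fin n))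
    (σ : Fin k → ℝ) (hσpos : ∀ j, 0 < σ j) (hσanti : Antitone σ)
    (u : Fin k → EuclideanSpace ℝ (Fin n)) (v : Fin k → EuclideanSpace ℝ (Fin k))
    (hu : Orthonormal ℝ u) (hv : Orthonormal ℝ v)
    (hsvd : ∀ w, T w = ∑ j, (σ j * ⟪v j, w⟫) • u j)
    (z : EuclideanSpace ℝ (Fin k)) :
    σ ⟨k - 1, Nat.sub_lt hk one_pos⟩ * ‖z‖ ≤ ‖T z‖ ∧ ‖T z‖ ≤ σ ⟨0, hk⟩ * ‖z‖ := by
  haveI : Nonempty (Fin k) := ⟨⟨0, hk⟩⟩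
  set σmin := σ ⟨k - 1, Nat.sub_lt hk one_pos⟩ with hσm
  set σmax := σ ⟨0, hk⟩ with hσM
  have hmin : ∀ j, σmin ≤ σ j := fun j =>
    hσanti (by exact Fin.mk_le_of_le_val (Nat.le_sub_one_of_lt j.isLt))
  have hmax : ∀ j, σ j ≤ σmax := fun j => hσanti (by exact Fin.mk_le_of_le_val (Nat.zero_le _))
  -- ‖T z‖² = ∑ (σ j * ⟪v j, z⟫)²
  have hTz : ‖T z‖ ^ 2 = ∑ j, (σ j * ⟪v j, z⟫) ^ 2 := by
    rw [← real_inner_self_eq_norm_sq, hsvd z]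
    rw [hu.inner_sum (fun j => σ j * ⟪v j, z⟫) (fun j => σ j * ⟪v j, z⟫)]
    simp [sq]
  -- Parseval for v
  have hspan : ⊤ ≤ Submodule.span ℝ (Set.range v) :=
    ge_of_eq (hv.linearIndependent.span_eq_top_of_card_eq_finrank (by simp))
  set b : OrthonormalBasis (Fin k) ℝ (EuclideanSpace ℝ (Fin k)) := OrthonormalBasis.mk hv hspan
  have hparseval : ∑ j, ⟪v j, z⟫ ^ 2 = ‖z‖ ^ 2 := by
    have := b.sum_inner_mul_inner z z
    rw [real_inner_self_eq_norm_sq] at this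
    rw [← this]
    refine Finset.sum_congr rfl fun j _ => ?_
    have hb : b j = v j := by simp [b, OrthonormalBasis.coe_mk]
    rw [hb, real_inner_comm z (v j), sq]
  have hlow : σmin ^ 2 * ‖z‖ ^ 2 ≤ ‖T z‖ ^ 2 := by
    rw [hTz, ← hparseval, Finset.mul_sum]
    refine Finset.sum_le_sum fun j _ => ?_
    rw [mul_pow]
    have h2 : σmin ^ 2 ≤ σ j ^ 2 :=
      pow_le_pow_left₀ (le_of_lt (hσpos _)) (hmin j) 2
    nlinarith [sq_nonneg (⟪v j, z⟫), h2]
  have hhigh : ‖T z‖ ^ 2 ≤ σmax ^ 2 * ‖z‖ ^ 2 := by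
    rw [hTz, ← hparseval, Finset.mul_sum]
    refine Finset.sum_le_sum fun j _ => ?_
    rw [mul_pow]
    have h2 : σ j ^ 2 ≤ σmax ^ 2 :=
      pow_le_pow_left₀ (le_of_lt (hσpos _)) (hmax j) 2
    nlinarith [sq_nonneg (⟪v j, z⟫), h2]
  constructor
  · have := Real.sqrt_le_sqrt hlow
    rwa [Real.sqrt_sq (norm_nonneg _), ← mul_pow,
      Real.sqrt_sq (mul_nonneg (hσpos _).le (norm_nonneg _))] at this
  · have := Real.sqrt_le_sqrt hhigh
    rwa [Real.sqrt_sq (norm_nonneg _), ← mul_pow,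
      Real.sqrt_sq (mul_nonneg (hσpos _).le (norm_nonneg _))] at this

lemma quot_ineqs {k n : ℕ}
    (Jd : EuclideanSpace ℝ (Fin k) →L[ℝ] EuclideanSpace ℝ (Fin n))
    (σm σM M : ℝ) (hσm : 0 < σm) (hσM : 0 < σM) (hM : 0 ≤ M)
    (hlow : ∀ z, σm * ‖z‖ ≤ ‖Jd z‖) (hhigh : ∀ z, ‖Jd z‖ ≤ σM * ‖z‖)
    (Se' w : EuclideanSpace ℝ (Fin k)) (Dww : EuclideanSpace ℝ (Fin n))
    (Sg' : EuclideanSpace ℝ (Fin n))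
    (hD : ‖Dww‖ ≤ M * ‖w‖ ^ 2) (hw : w ≠ 0) (hkeyv : Sg' = Jd Se' + Dww) :
    sInf {c | ∃ l : ℝ, c = ‖Sg' - l • (Jd w)‖} / ‖Jd w‖ ^ 2
        ≤ σM / σm ^ 2 * (sInf {c | ∃ l : ℝ, c = ‖Se' - l • w‖} / ‖w‖ ^ 2) + M / σm ^ 2
      ∧ sInf {c | ∃ l : ℝ, c = ‖Se' - l • w‖} / ‖w‖ ^ 2
        ≤ σM ^ 2 / σm * (sInf {c | ∃ l : ℝ, c = ‖Sg' - l • (Jd w)‖} / ‖Jd w‖ ^ 2) + M / σm := by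
  have hwpos : 0 < ‖w‖ := norm_pos_iff.mpr hw
  have hJdw : σm * ‖w‖ ≤ ‖Jd w‖ := hlow w
  have hJdwpos : 0 < ‖Jd w‖ := lt_of_lt_of_le (by positivity) hJdw
  set Ne := sInf {c | ∃ l : ℝ, c = ‖Se' - l • w‖} with hNe
  set Ng := sInf {c | ∃ l : ℝ, c = ‖Sg' - l • (Jd w)‖} with hNg
  have hne_e : {c | ∃ l : ℝ, c = ‖Se' - l • w‖}.Nonempty := ⟨_, 0, rfl⟩
  have hne_g : {c | ∃ l : ℝ, c = ‖Sg' - l • (Jd w)‖}.Nonempty := ⟨_, 0, rfl⟩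
  have hbd_e : BddBelow {c | ∃ l : ℝ, c = ‖Se' - l • w‖} :=
    ⟨0, by rintro c ⟨l, rfl⟩; positivity⟩
  have hbd_g : BddBelow {c | ∃ l : ℝ, c = ‖Sg' - l • (Jd w)‖} :=
    ⟨0, by rintro c ⟨l, rfl⟩; positivity⟩
  have hNe0 : 0 ≤ Ne := le_csInf hne_e (by rintro c ⟨l, rfl⟩; positivity)
  have hNg0 : 0 ≤ Ng := le_csInf hne_g (by rintro c ⟨l, rfl⟩; positivity)
  have hkey : ∀ l : ℝ, Sg' - l • (Jd w) = Jd (Se' - l • w) + Dww := by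
    intro l
    rw [hkeyv, map_sub, map_smul]
    abel
  have hNe_le : ∀ l : ℝ, Ne ≤ ‖Se' - l • w‖ := fun l => csInf_le hbd_e ⟨l, rfl⟩
  have hNg_le : ∀ l : ℝ, Ng ≤ ‖Sg' - l • (Jd w)‖ := fun l => csInf_le hbd_g ⟨l, rfl⟩
  have hJd2low : σm ^ 2 * ‖w‖ ^ 2 ≤ ‖Jd w‖ ^ 2 := by
    have := pow_le_pow_left₀ (by positivity) hJdw 2
    rwa [mul_pow] at this
  have hJd2high : ‖Jd w‖ ^ 2 ≤ σM ^ 2 * ‖w‖ ^ 2 := by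
    have := pow_le_pow_left₀ (norm_nonneg _) (hhigh w) 2
    rwa [mul_pow] at this
  constructor
  · -- upper bound for g-quotient
    have hub : Ng ≤ σM * Ne + M * ‖w‖ ^ 2 := by
      have h1 : ∀ l : ℝ, Ng ≤ σM * ‖Se' - l • w‖ + M * ‖w‖ ^ 2 := by
        intro l
        refine (hNg_le l).trans ?_
        rw [hkey l]
        calc ‖Jd (Se' - l • w) + Dww‖ ≤ ‖Jd (Se' - l • w)‖ + ‖Dww‖ := norm_add_le _ _
          _ ≤ σM * ‖Se' - l • w‖ + M * ‖w‖ ^ 2 := add_le_add (hhigh _) hD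
      have h2 : (Ng - M * ‖w‖ ^ 2) / σM ≤ Ne := by
        refine le_csInf hne_e ?_
        rintro c ⟨l, rfl⟩
        rw [div_le_iff₀ hσM]
        nlinarith [h1 l]
      have h3 := (div_le_iff₀ hσM).mp h2
      nlinarith [h3]
    calc Ng / ‖Jd w‖ ^ 2 ≤ (σM * Ne + M * ‖w‖ ^ 2) / (σm ^ 2 * ‖w‖ ^ 2) := by
          apply div_le_div₀ (by positivity) hub (by positivity) hJd2low
      _ = σM / σm ^ 2 * (Ne / ‖w‖ ^ 2) + M / σm ^ 2 := by
          field_simp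
  · -- upper bound for e-quotient
    have hlb : σm * Ne - M * ‖w‖ ^ 2 ≤ Ng := by
      refine le_csInf hne_g ?_
      rintro c ⟨l, rfl⟩
      have h1 : ‖Jd (Se' - l • w)‖ ≤ ‖Sg' - l • (Jd w)‖ + ‖Dww‖ := by
        have : Jd (Se' - l • w) = (Sg' - l • (Jd w)) - Dww := by rw [hkey l]; abel
        rw [this]
        exact norm_sub_le _ _
      have h2 : σm * Ne ≤ σm * ‖Se' - l • w‖ :=
        mul_le_mul_of_nonneg_left (hNe_le l) hσm.le
      have h3 := hlow (Se' - l • w)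
      linarith [hD]
    have hstep : Ne / ‖w‖ ^ 2 ≤ (Ng + M * ‖w‖ ^ 2) / (σm * ‖w‖ ^ 2) := by
      rw [div_le_div_iff₀ (by positivity) (by positivity)]
      nlinarith [hlb]
    have hstep2 : Ng / (σm * ‖w‖ ^ 2) ≤ σM ^ 2 / σm * (Ng / ‖Jd w‖ ^ 2) := by
      rw [div_mul_div_comm, div_le_div_iff₀ (by positivity) (by positivity)]
      nlinarith [hJd2high, hNg0, hσm.le, mul_le_mul_of_nonneg_left hJd2high hNg0]
    calc Ne / ‖w‖ ^ 2 ≤ (Ng + M * ‖w‖ ^ 2) / (σm * ‖w‖ ^ 2) := hstep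
      _ = Ng / (σm * ‖w‖ ^ 2) + M / σm := by field_simp
      _ ≤ σM ^ 2 / σm * (Ng / ‖Jd w‖ ^ 2) + M / σm := by linarith [hstep2]

lemma minLamQuot_nonneg {n m : ℕ} (f : EuclideanSpace ℝ (Fin n) → EuclideanSpace ℝ (Fin m))
    (x ε : EuclideanSpace ℝ (Fin n)) : 0 ≤ minLamQuot f x ε :=
  div_nonneg (Real.sInf_nonneg (by rintro c ⟨l, rfl⟩; positivity)) (by positivity)

/-- For `g = d ∘ e` with singular values `σ₁ ≥ ⋯ ≥ σₖ > 0` of `J_d(e(x'))`: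
`limsup_{ε→0} min_λ ‖[εᵀH_{gᵢ}ε]ᵢ − λJ_gε‖/‖J_gε‖² ≤ σ₁C(e)/σₖ² + √(Σᵢ‖H_{dᵢ}‖_F²)/σₖ²`. -/
theorem encoder_decoder_curvature_bound {n k : ℕ} (hk : 0 < k)
    (e : EuclideanSpace ℝ (Fin n) → EuclideanSpace ℝ (Fin k))
    (d : EuclideanSpace ℝ (Fin k) → EuclideanSpace ℝ (Fin n))
    (he : ContDiff ℝ (⊤ : ℕ∞) e) (hd : ContDiff ℝ (⊤ : ℕ∞) d)
    (x' : EuclideanSpace ℝ (Fin n))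
    (σ : Fin k → ℝ) (hσpos : ∀ j, 0 < σ j) (hσanti : Antitone σ)
    (u : Fin k → EuclideanSpace ℝ (Fin n)) (v : Fin k → EuclideanSpace ℝ (Fin k))
    (hu : Orthonormal ℝ u) (hv : Orthonormal ℝ v)
    (hsvd : ∀ w, fderiv ℝ d (e x') w = ∑ j, (σ j * ⟪v j, w⟫) • u j) :
    paperLimsup (minLamQuot (d ∘ e) x') (fun ε => fderiv ℝ (d ∘ e) x' ε ≠ 0)
      ≤ σ ⟨0, hk⟩ * paperLimsup (minLamQuot e x') (fun ε => fderiv ℝ e x' ε ≠ 0)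
            / (σ ⟨k - 1, Nat.sub_lt hk one_pos⟩) ^ 2
        + Real.sqrt (∑ i : Fin n, ∑ a : Fin k, ∑ b : Fin k,
              (fderiv ℝ (fun w => fderiv ℝ (fun z => d z i) w (EuclideanSpace.single b 1))
                (e x') (EuclideanSpace.single a 1)) ^ 2)
            / (σ ⟨k - 1, Nat.sub_lt hk one_pos⟩) ^ 2 := by
  classical
  have hde : Differentiable ℝ e := he.differentiable (by simp)
  have hdd : Differentiable ℝ d := hd.differentiable (by simp)
  set σm := σ ⟨k - 1, Nat.sub_lt hk one_pos⟩ with hσmdef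
  set σM := σ ⟨0, hk⟩ with hσMdef
  have hσm : 0 < σm := hσpos _
  have hσM : 0 < σM := hσpos _
  set Je := fderiv ℝ e x' with hJedef
  set Jd := fderiv ℝ d (e x') with hJddef
  set D2 := fderiv ℝ (fderiv ℝ d) (e x') with hD2def
  set M := Real.sqrt (∑ i : Fin n, ∑ a : Fin k, ∑ b : Fin k,
      (D2 (EuclideanSpace.single a 1) (EuclideanSpace.single b 1) i) ^ 2) with hMdef
  have hM : 0 ≤ M := Real.sqrt_nonneg _
  have hMeq : Real.sqrt (∑ i : Fin n, ∑ a : Fin k, ∑ b : Fin k,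
      (fderiv ℝ (fun w => fderiv ℝ (fun z => d z i) w (EuclideanSpace.single b 1))
            (e x') (EuclideanSpace.single a 1)) ^ 2) = M := by
    rw [hMdef]
    congr 1
    refine Finset.sum_congr rfl fun i _ => Finset.sum_congr rfl fun a _ =>
      Finset.sum_congr rfl fun b _ => ?_
    rw [hentry hd (e x') i a b]
  rw [hMeq]
  have hbil : ∀ w, ‖D2 w w‖ ≤ M * ‖w‖ ^ 2 := fun w => bilin_bound D2 w
  have hlow : ∀ z, σm * ‖z‖ ≤ ‖Jd z‖ :=
    fun z => (svd_bounds hk Jd σ hσpos hσanti u v hu hv hsvd z).1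
  have hhigh : ∀ z, ‖Jd z‖ ≤ σM * ‖z‖ :=
    fun z => (svd_bounds hk Jd σ hσpos hσanti u v hu hv hsvd z).2
  have hJg : fderiv ℝ (d ∘ e) x' = Jd.comp Je :=
    fderiv_comp x' (hdd (e x')) (hde x')
  have hJgap : ∀ ε, fderiv ℝ (d ∘ e) x' ε = Jd (Je ε) := fun ε => by rw [hJg]; rfl
  have hPiff : ∀ ε, fderiv ℝ (d ∘ e) x' ε ≠ 0 ↔ Je ε ≠ 0 := by
    intro ε
    rw [hJgap ε]
    constructor
    · intro h hw
      exact h (by rw [hw, map_zero])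
    · intro h hc
      have h1 := hlow (Je ε)
      rw [hc, norm_zero] at h1
      have h2 : ‖Je ε‖ ≤ 0 := by nlinarith
      exact h (norm_le_zero_iff.mp h2)
  -- the two pointwise inequalities
  have hmq_g : ∀ ε, minLamQuot (d ∘ e) x' ε
      = sInf {c | ∃ l : ℝ, c = ‖secondDirDeriv (d ∘ e) x' ε - l • (Jd (Je ε))‖}
        / ‖Jd (Je ε)‖ ^ 2 := by
    intro ε
    rw [minLamQuot, hJgap ε]
  have hmq_e : ∀ ε, minLamQuot e x' ε
      = sInf {c | ∃ l : ℝ, c = ‖secondDirDeriv e x' ε - l • (Je ε)‖} / ‖Je ε‖ ^ 2 := by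
    intro ε
    rw [minLamQuot]
  have hQ : ∀ ε, Je ε ≠ 0 →
      minLamQuot (d ∘ e) x' ε ≤ σM / σm ^ 2 * minLamQuot e x' ε + M / σm ^ 2
      ∧ minLamQuot e x' ε ≤ σM ^ 2 / σm * minLamQuot (d ∘ e) x' ε + M / σm := by
    intro ε hw
    have h := quot_ineqs Jd σm σM M hσm hσM hM hlow hhigh
      (secondDirDeriv e x' ε) (Je ε) (D2 (Je ε) (Je ε)) (secondDirDeriv (d ∘ e) x' ε)
      (hbil (Je ε)) hw (sdd_comp he hd x' ε)
    rw [hmq_g ε, hmq_e ε]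
    exact h
  have hFg0 : ∀ ε, 0 ≤ minLamQuot (d ∘ e) x' ε := fun ε => minLamQuot_nonneg _ _ _
  have hFe0 : ∀ ε, 0 ≤ minLamQuot e x' ε := fun ε => minLamQuot_nonneg _ _ _
  -- the sets of sequential limits
  set Sg := {L : ℝ | ∃ us : ℕ → EuclideanSpace ℝ (Fin n),
    (∀ i, fderiv ℝ (d ∘ e) x' (us i) ≠ 0) ∧ Tendsto us atTop (nhds 0) ∧
      Tendsto (fun i => minLamQuot (d ∘ e) x' (us i)) atTop (nhds L)} with hSgdef
  set Se := {L : ℝ | ∃ us : ℕ → EuclideanSpace ℝ (Fin n),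
    (∀ i, Je (us i) ≠ 0) ∧ Tendsto us atTop (nhds 0) ∧
      Tendsto (fun i => minLamQuot e x' (us i)) atTop (nhds L)} with hSedef
  have hLg : paperLimsup (minLamQuot (d ∘ e) x') (fun ε => fderiv ℝ (d ∘ e) x' ε ≠ 0)
      = sSup Sg := rfl
  have hLe : paperLimsup (minLamQuot e x') (fun ε => Je ε ≠ 0) = sSup Se := rfl
  rw [hLg, hLe]
  have hCe0 : 0 ≤ sSup Se := by
    rcases Set.eq_empty_or_nonempty Se with h | h
    · rw [h, Real.sSup_empty]
    · refine Real.sSup_nonneg ?_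
      rintro L ⟨us, hP, h0, hF⟩
      exact ge_of_tendsto' hF fun i => hFe0 (us i)
  have hRHS0 : 0 ≤ σM * sSup Se / σm ^ 2 + M / σm ^ 2 := by positivity
  by_cases hSeb : BddAbove Se
  · -- main case
    refine Real.sSup_le ?_ hRHS0
    rintro L ⟨us, hP, h0, hFgL⟩
    -- the e-quotients along us are bounded
    obtain ⟨K0, hK0⟩ := hFgL.bddAbove_range
    have hK0' : ∀ i, minLamQuot (d ∘ e) x' (us i) ≤ K0 := fun i =>
      hK0 (Set.mem_range_self i)
    set K := σM ^ 2 / σm * K0 + M / σm with hKdef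
    have hKb : ∀ i, minLamQuot e x' (us i) ∈ Set.Icc 0 K := by
      intro i
      refine ⟨hFe0 _, ?_⟩
      have := (hQ (us i) ((hPiff (us i)).mp (hP i))).2
      have h2 : σM ^ 2 / σm * minLamQuot (d ∘ e) x' (us i) ≤ σM ^ 2 / σm * K0 :=
        mul_le_mul_of_nonneg_left (hK0' i) (by positivity)
      rw [hKdef]; linarith
    obtain ⟨ℓ, -, φ, hφ, hℓ⟩ := tendsto_subseq_of_bounded
      (Metric.isBounded_Icc (0 : ℝ) K) hKb
    have hℓSe : ℓ ∈ Se :=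
      ⟨us ∘ φ, fun i => (hPiff (us (φ i))).mp (hP (φ i)),
        h0.comp hφ.tendsto_atTop, hℓ⟩
    have hℓle : ℓ ≤ sSup Se := le_csSup hSeb hℓSe
    have hL : L ≤ σM / σm ^ 2 * ℓ + M / σm ^ 2 := by
      have hf : Tendsto (fun i => minLamQuot (d ∘ e) x' (us (φ i))) atTop (nhds L) :=
        hFgL.comp hφ.tendsto_atTop
      have hg : Tendsto (fun i => σM / σm ^ 2 * minLamQuot e x' (us (φ i)) + M / σm ^ 2)
          atTop (nhds (σM / σm ^ 2 * ℓ + M / σm ^ 2)) :=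
        ((hℓ.const_mul _).add_const _)
      exact le_of_tendsto_of_tendsto' hf hg
        (fun i => (hQ (us (φ i)) ((hPiff (us (φ i))).mp (hP (φ i)))).1)
    have : σM / σm ^ 2 * ℓ ≤ σM / σm ^ 2 * sSup Se :=
      mul_le_mul_of_nonneg_left hℓle (by positivity)
    calc L ≤ σM / σm ^ 2 * ℓ + M / σm ^ 2 := hL
      _ ≤ σM / σm ^ 2 * sSup Se + M / σm ^ 2 := by linarith
      _ = σM * sSup Se / σm ^ 2 + M / σm ^ 2 := by ring
  · -- Se unbounded ⟹ Sg unbounded ⟹ sSup Sg = 0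
    have hSgub : ¬ BddAbove Sg := by
      rintro ⟨c, hc⟩
      obtain ⟨ℓ, hℓSe, hℓgt⟩ := (not_bddAbove_iff.mp hSeb) (σM ^ 2 / σm * c + M / σm)
      obtain ⟨vs, hPv, h0v, hFeℓ⟩ := hℓSe
      obtain ⟨K0, hK0⟩ := hFeℓ.bddAbove_range
      have hK0' : ∀ i, minLamQuot e x' (vs i) ≤ K0 := fun i => hK0 (Set.mem_range_self i)
      set K := σM / σm ^ 2 * K0 + M / σm ^ 2 with hKdef
      have hKb : ∀ i, minLamQuot (d ∘ e) x' (vs i) ∈ Set.Icc 0 K := by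
        intro i
        refine ⟨hFg0 _, ?_⟩
        have := (hQ (vs i) (hPv i)).1
        have h2 : σM / σm ^ 2 * minLamQuot e x' (vs i) ≤ σM / σm ^ 2 * K0 :=
          mul_le_mul_of_nonneg_left (hK0' i) (by positivity)
        rw [hKdef]; linarith
      obtain ⟨a, -, φ, hφ, ha⟩ := tendsto_subseq_of_bounded
        (Metric.isBounded_Icc (0 : ℝ) K) hKb
      have haSg : a ∈ Sg :=
        ⟨vs ∘ φ, fun i => (hPiff (vs (φ i))).mpr (hPv (φ i)),
          h0v.comp hφ.tendsto_atTop, ha⟩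
      have hac : a ≤ c := hc haSg
      -- but a is bounded below by something > c
      have hlower : (ℓ - M / σm) * (σm / σM ^ 2) ≤ a := by
        have hf : Tendsto (fun i => (minLamQuot e x' (vs (φ i)) - M / σm) * (σm / σM ^ 2))
            atTop (nhds ((ℓ - M / σm) * (σm / σM ^ 2))) :=
          (((hFeℓ.comp hφ.tendsto_atTop).sub_const _).mul_const _)
        refine le_of_tendsto_of_tendsto' hf ha ?_
        intro i
        have hq := (hQ (vs (φ i)) (hPv (φ i))).2
        have h1 : minLamQuot e x' (vs (φ i)) - M / σm
            ≤ σM ^ 2 / σm * minLamQuot (d ∘ e) x' (vs (φ i)) := by linarith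
        have h2 := mul_le_mul_of_nonneg_right h1
          (by positivity : (0:ℝ) ≤ σm / σM ^ 2)
        have h3 : σM ^ 2 / σm * minLamQuot (d ∘ e) x' (vs (φ i)) * (σm / σM ^ 2)
            = minLamQuot (d ∘ e) x' (vs (φ i)) := by field_simp
        rw [h3] at h2
        exact h2
      have : c < a := by
        have hgt : σM ^ 2 / σm * c + M / σm < ℓ := hℓgt
        have h1 : σM ^ 2 / σm * c < ℓ - M / σm := by linarith
        have h2 := mul_lt_mul_of_pos_right h1
          (by positivity : (0:ℝ) < σm / σM ^ 2)
        have h3 : σM ^ 2 / σm * c * (σm / σM ^ 2) = c := by field_simp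
        rw [h3] at h2
        linarith
      linarith
    rw [Real.sSup_of_not_bddAbove hSgub]
    exact hRHS0
end
end
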